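/- arXiv:1404.3035 — 4 statements merged into one kernel-verified Lean document; each statement's English description precedes it below -/
import Mathlib

section
/- Let B and R be invertible m×m matrices over a field K, and let C be the 2m×2m block matrix C = [[B, R], [R^{-1}, 0]]. Then for every j ≥ 1, C^j = [[F_{j+1}(B), F_j(B)·R], [R^{-1}·F_j(B), R^{-1}·F_{j-1}(B)·R]], where F_n denotes the n-th Fibonacci polynomial evaluated at the matrix B. -/
open Polynomial Matrix

noncomputable def fibPoly (R : Type*) [CommRing R] : ℕ → Polynomial R
  | 0 => 0
  | 1 => 1
  | (n + 2) => X * fibPoly R (n + 1) + fibPoly R n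

lemma fibPoly_rec (R : Type*) [CommRing R] (n : ℕ) :
    fibPoly R (n + 2) = X * fibPoly R (n + 1) + fibPoly R n := rfl

lemma aeval_comm_self {K : Type*} [Field K] {m : ℕ}
    (B : Matrix (Fin m) (Fin m) K) (p : Polynomial K) :
    Polynomial.aeval B p * B = B * Polynomial.aeval B p := by
  have : Polynomial.aeval B (p * X) = Polynomial.aeval B (X * p) := by ring_nf
  simpa [_root_.map_mul] using this

theorem stmt_5 (K : Type*) [Field K] (m : ℕ)
    (B R : Matrix (Fin m) (Fin m) K) (hB : IsUnit B) (hR : IsUnit R)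
    (C : Matrix (Fin m ⊕ Fin m) (Fin m ⊕ Fin m) K)
    (hC : C = Matrix.fromBlocks B R R⁻¹ 0)
    (j : ℕ) (hj : 1 ≤ j) :
    C ^ j = Matrix.fromBlocks
      (Polynomial.aeval B (fibPoly K (j + 1)))
      (Polynomial.aeval B (fibPoly K j) * R)
      (R⁻¹ * Polynomial.aeval B (fibPoly K j))
      (R⁻¹ * Polynomial.aeval B (fibPoly K (j - 1)) * R) := by
  have hRR : R * R⁻¹ = 1 :=
    Matrix.mul_nonsing_inv R ((Matrix.isUnit_iff_isUnit_det R).mp hR)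
  induction j, hj using Nat.le_induction with
  | base =>
    simp [hC, fibPoly, _root_.map_one, _root_.map_zero]
  | succ n hn ih =>
    have hrec : ∀ k, Polynomial.aeval B (fibPoly K (k + 2)) =
        B * Polynomial.aeval B (fibPoly K (k + 1)) + Polynomial.aeval B (fibPoly K k) := by
      intro k
      rw [fibPoly_rec, _root_.map_add, _root_.map_mul, aeval_X]
    obtain ⟨k, rfl⟩ := Nat.exists_eq_add_of_le' hn
    rw [pow_succ, ih, hC, Matrix.fromBlocks_multiply, Matrix.fromBlocks_inj]
    refine ⟨?_, ?_, ?_, ?_⟩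
    · -- top left
      rw [aeval_comm_self, mul_assoc, hRR, mul_one]
      have h2 := hrec (k + 1)
      rw [show k + 1 + 2 = k + 1 + 1 + 1 from rfl] at h2
      rw [h2, add_comm]
    · simp
    · rw [mul_assoc R⁻¹, aeval_comm_self, mul_assoc (R⁻¹ * _), mul_assoc,
        hRR, mul_one, ← mul_assoc, mul_assoc R⁻¹, ← mul_add]
      congr 1
      have h2 := hrec k
      rw [show k + 2 = k + 1 + 1 from rfl] at h2
      rw [Nat.add_sub_cancel, h2, add_comm]
    · simp [Nat.add_sub_cancel, mul_assoc]
end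

section
/- Let K be a field of characteristic 2, B, R invertible m×m matrices over K, A an m×m matrix over K, and let C be the 2m×2m block matrix C = [[B + A·R^{-1}, R + B·A + A·R^{-1}·A], [R^{-1}, R^{-1}·A]]. Then for every j ≥ 1, C^j = [[F_{j+1}(B) + A·R^{-1}·F_j(B), F_{j+1}(B)·A + F_j(B)·R + A·R^{-1}·(F_j(B)·A + F_{j-1}(B)·R)], [R^{-1}·F_j(B), R^{-1}·(F_j(B)·A + F_{j-1}(B)·R)]]. -/
open Polynomial Matrix

section BlockEqs
variable {M : Type*} [Ring M] (P Q S B A Ri R : M)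

lemma blk_eq1 (h2 : ∀ x : M, x + x = 0) (hR : ∀ x, R * (Ri * x) = x) (hR1 : R * Ri = 1)
    (hPB : ∀ x, P * (B * x) = B * (P * x)) (hPB1 : P * B = B * P)
    (hQB : ∀ x, Q * (B * x) = B * (Q * x)) (hQB1 : Q * B = B * Q) :
    (P + A * Ri * Q) * (B + A * Ri) + (P * A + Q * R + A * Ri * (Q * A + S * R)) * Ri
      = (B * P + Q) + A * Ri * (B * Q + S) := by
  simp only [mul_add, add_mul, mul_assoc, hR, hR1, mul_one, hPB, hPB1, hQB, hQB1]
  trans B * P + Q + (A * (Ri * (B * Q)) + A * (Ri * S)) + (P * (A * Ri) + P * (A * Ri))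
      + (A * (Ri * (Q * (A * Ri))) + A * (Ri * (Q * (A * Ri))))
  · abel
  · simp only [h2, add_zero, mul_add]

lemma blk_eq2 (h2 : ∀ x : M, x + x = 0) (hR : ∀ x, R * (Ri * x) = x) (hR1 : R * Ri = 1)
    (hPB : ∀ x, P * (B * x) = B * (P * x)) (hPB1 : P * B = B * P)
    (hQB : ∀ x, Q * (B * x) = B * (Q * x)) (hQB1 : Q * B = B * Q) :
    (P + A * Ri * Q) * (R + B * A + A * Ri * A)
        + (P * A + Q * R + A * Ri * (Q * A + S * R)) * (Ri * A)
      = (B * P + Q) * A + P * R + A * Ri * ((B * Q + S) * A + Q * R) := by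
  simp only [mul_add, add_mul, mul_assoc, hR, hR1, mul_one, hPB, hPB1, hQB, hQB1]
  trans B * (P * A) + Q * A + P * R + A * (Ri * (B * (Q * A))) + A * (Ri * (S * A))
      + A * (Ri * (Q * R)) + (P * (A * (Ri * A)) + P * (A * (Ri * A)))
      + (A * (Ri * (Q * (A * (Ri * A)))) + A * (Ri * (Q * (A * (Ri * A)))))
  · abel
  · simp only [h2, add_zero, mul_add]
    abel

lemma blk_eq3 (h2 : ∀ x : M, x + x = 0) (hR : ∀ x, R * (Ri * x) = x) (hR1 : R * Ri = 1)
    (hQB : ∀ x, Q * (B * x) = B * (Q * x)) (hQB1 : Q * B = B * Q) :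
    Ri * Q * (B + A * Ri) + Ri * (Q * A + S * R) * Ri = Ri * (B * Q + S) := by
  simp only [mul_add, add_mul, mul_assoc, hR, hR1, mul_one, hQB, hQB1]
  trans Ri * (B * Q) + Ri * S + (Ri * (Q * (A * Ri)) + Ri * (Q * (A * Ri)))
  · abel
  · simp only [h2, add_zero, mul_add]

lemma blk_eq4 (h2 : ∀ x : M, x + x = 0) (hR : ∀ x, R * (Ri * x) = x) (hR1 : R * Ri = 1)
    (hQB : ∀ x, Q * (B * x) = B * (Q * x)) (hQB1 : Q * B = B * Q) :
    Ri * Q * (R + B * A + A * Ri * A) + Ri * (Q * A + S * R) * (Ri * A)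
      = Ri * ((B * Q + S) * A + Q * R) := by
  simp only [mul_add, add_mul, mul_assoc, hR, hR1, mul_one, hQB, hQB1]
  trans Ri * (B * (Q * A)) + Ri * (S * A) + Ri * (Q * R)
      + (Ri * (Q * (A * (Ri * A))) + Ri * (Q * (A * (Ri * A))))
  · abel
  · simp only [h2, add_zero, mul_add]

end BlockEqs

theorem stmt_6 (K : Type*) [Field K] [CharP K 2] (m : ℕ)
    (B R A : Matrix (Fin m) (Fin m) K) (hB : IsUnit B) (hR : IsUnit R)
    (C : Matrix (Fin m ⊕ Fin m) (Fin m ⊕ Fin m) K)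
    (hC : C = Matrix.fromBlocks
      (B + A * R⁻¹) (R + B * A + A * R⁻¹ * A) R⁻¹ (R⁻¹ * A))
    (j : ℕ) (hj : 1 ≤ j) :
    C ^ j = Matrix.fromBlocks
      (Polynomial.aeval B (fibPoly K (j + 1)) +
        A * R⁻¹ * Polynomial.aeval B (fibPoly K j))
      (Polynomial.aeval B (fibPoly K (j + 1)) * A +
        Polynomial.aeval B (fibPoly K j) * R +
        A * R⁻¹ * (Polynomial.aeval B (fibPoly K j) * A +
          Polynomial.aeval B (fibPoly K (j - 1)) * R))
      (R⁻¹ * Polynomial.aeval B (fibPoly K j))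
      (R⁻¹ * (Polynomial.aeval B (fibPoly K j) * A +
        Polynomial.aeval B (fibPoly K (j - 1)) * R)) := by
  -- char two facts
  have h2K : (2 : K) = 0 := by exact_mod_cast CharP.cast_eq_zero K 2
  have h2 : ∀ x : Matrix (Fin m) (Fin m) K, x + x = 0 := by
    intro x
    ext i l
    simp [← two_mul, h2K]
  -- inverse facts
  have hR1 : R * R⁻¹ = 1 :=
    Matrix.mul_nonsing_inv R ((Matrix.isUnit_iff_isUnit_det R).mp hR)
  have hRall : ∀ x : Matrix (Fin m) (Fin m) K, R * (R⁻¹ * x) = x := by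
    intro x; rw [← mul_assoc, hR1, one_mul]
  -- commutation facts
  have comm1 : ∀ p : Polynomial K, Polynomial.aeval B p * B = B * Polynomial.aeval B p := by
    intro p
    have h1 : Polynomial.aeval B (p * X) = Polynomial.aeval B (X * p) := by rw [mul_comm]
    simpa [_root_.map_mul, Polynomial.aeval_X] using h1
  have commall : ∀ (p : Polynomial K) (x : Matrix (Fin m) (Fin m) K),
      Polynomial.aeval B p * (B * x) = B * (Polynomial.aeval B p * x) := by
    intro p x
    rw [← mul_assoc, comm1, mul_assoc]
  -- recurrence
  have hrec : ∀ n : ℕ, Polynomial.aeval B (fibPoly K (n + 2))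
      = B * Polynomial.aeval B (fibPoly K (n + 1)) + Polynomial.aeval B (fibPoly K n) := by
    intro n
    show Polynomial.aeval B (X * fibPoly K (n + 1) + fibPoly K n) = _
    simp [map_add, _root_.map_mul, Polynomial.aeval_X]
  -- reduce to j = k + 1
  obtain ⟨k, rfl⟩ : ∃ k, j = k + 1 := ⟨j - 1, (Nat.succ_pred_eq_of_pos hj).symm⟩
  clear hj
  rw [show k + 1 - 1 = k from rfl]
  induction k with
  | zero =>
    subst hC
    simp only [Nat.zero_add, zero_add, pow_one]
    show _ = Matrix.fromBlocks
      (Polynomial.aeval B (fibPoly K 2) + A * R⁻¹ * Polynomial.aeval B (fibPoly K 1)) _ _ _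
    have f0 : fibPoly K 0 = 0 := rfl
    have f1 : fibPoly K 1 = 1 := rfl
    have f2 : fibPoly K 2 = X * 1 + 0 := rfl
    rw [f2, f1, f0]
    simp only [map_add, _root_.map_mul, _root_.map_one, _root_.map_zero, Polynomial.aeval_X,
      mul_one, add_zero, one_mul, zero_mul, zero_add, mul_zero]
    congr 1
    abel
  | succ k ih =>
    rw [pow_succ, ih]
    nth_rewrite 1 [hC]
    rw [Matrix.fromBlocks_multiply]
    rw [blk_eq1 _ _ _ _ A R⁻¹ R h2 hRall hR1 (commall _) (comm1 _) (commall _) (comm1 _),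
      blk_eq2 _ _ _ _ A R⁻¹ R h2 hRall hR1 (commall _) (comm1 _) (commall _) (comm1 _),
      blk_eq3 _ _ _ A R⁻¹ R h2 hRall hR1 (commall _) (comm1 _),
      blk_eq4 _ _ _ A R⁻¹ R h2 hRall hR1 (commall _) (comm1 _)]
    rw [show (k + 1 + 1 + 1) = k + 1 + 2 from rfl, hrec (k + 1), hrec k]
end

section
/- Let B be an invertible m×m matrix over F_2 whose characteristic polynomial is irreducible of degree m and has Fibonacci index 2^m + 1. Then for 1 ≤ j ≤ 2^m, the matrix F_j(B) is invertible, where F_j is the j-th Fibonacci polynomial over F_2. -/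
open Polynomial Matrix

theorem stmt_9 (m : ℕ) (B : Matrix (Fin m) (Fin m) (ZMod 2))
    (hB : IsUnit B)
    (hirr : Irreducible B.charpoly)
    (hdeg : B.charpoly.natDegree = m)
    (hdvd : B.charpoly ∣ fibPoly (ZMod 2) (2 ^ m + 1))
    (hleast : ∀ n : ℕ, 1 ≤ n → n < 2 ^ m + 1 → ¬ B.charpoly ∣ fibPoly (ZMod 2) n)
    (j : ℕ) (hj1 : 1 ≤ j) (hj2 : j ≤ 2 ^ m) :
    IsUnit (Polynomial.aeval B (fibPoly (ZMod 2) j)) := by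
  have hnd : ¬ B.charpoly ∣ fibPoly (ZMod 2) j := hleast j hj1 (by omega)
  have hcop : IsCoprime B.charpoly (fibPoly (ZMod 2) j) :=
    hirr.coprime_iff_not_dvd.mpr hnd
  obtain ⟨u, v, huv⟩ := hcop
  have h2 := congrArg (Polynomial.aeval B) huv
  rw [map_add, _root_.map_mul, _root_.map_mul, _root_.map_one, Matrix.aeval_self_charpoly, mul_zero,
    zero_add] at h2
  have hcomm : (aeval B) v * (aeval B) (fibPoly (ZMod 2) j)
      = (aeval B) (fibPoly (ZMod 2) j) * (aeval B) v := by
    rw [← _root_.map_mul (Polynomial.aeval B), mul_comm v (fibPoly (ZMod 2) j),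
      _root_.map_mul (Polynomial.aeval B)]
  exact ⟨⟨_, (aeval B) v, hcomm.symm.trans h2, h2⟩, rfl⟩
end

section
/- Let K be a field and B, R invertible m×m matrices over K with R and BR symmetric. Then the block matrix C = [[B, R], [R^{-1}, 0]] over K satisfies C^t·J·C = J (up to sign, i.e. C is symplectic) where J = [[0, I_m], [-I_m, 0]]; in particular over F_2, C preserves the standard symplectic form. -/
open Polynomial Matrix

theorem stmt_13 (K : Type*) [Field K] (m : ℕ)
    (B R : Matrix (Fin m) (Fin m) K) (hB : IsUnit B) (hR : IsUnit R)
    (hRsymm : Rᵀ = R) (hBRsymm : (B * R)ᵀ = B * R)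
    (C J : Matrix (Fin m ⊕ Fin m) (Fin m ⊕ Fin m) K)
    (hC : C = Matrix.fromBlocks B R R⁻¹ 0)
    (hJ : J = Matrix.fromBlocks 0 1 (-1) 0) :
    Cᵀ * J * C = J ∨ Cᵀ * J * C = -J := by
  right
  have hRdet : IsUnit R.det := (Matrix.isUnit_iff_isUnit_det R).mp hR
  have hinv : R⁻¹ * R = 1 := Matrix.nonsing_inv_mul R hRdet
  have hinvT : (R⁻¹)ᵀ = R⁻¹ := by
    rw [Matrix.transpose_nonsing_inv, hRsymm]
  have hBt : R * Bᵀ = B * R := by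
    conv_lhs => rw [← hRsymm]
    rw [← Matrix.transpose_mul, hBRsymm]
  have hkey : Bᵀ * R⁻¹ = R⁻¹ * B := by
    have : R * (Bᵀ * R⁻¹) = R * (R⁻¹ * B) := by
      rw [← mul_assoc, hBt, mul_assoc, Matrix.mul_nonsing_inv R hRdet,
        ← mul_assoc, Matrix.mul_nonsing_inv R hRdet, one_mul, mul_one]
    exact hR.mul_left_cancel this
  subst hC hJ
  rw [Matrix.fromBlocks_transpose, hRsymm, hinvT,
    Matrix.fromBlocks_multiply, Matrix.fromBlocks_multiply]
  simp [hkey, hinv, Matrix.mul_nonsing_inv R hRdet]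
  ext (i | i) (j | j) <;> simp [Matrix.fromBlocks]
end
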